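/- Define F(v) = Σ over quadruples (k₁,k₂,k₃,k₄) ∈ ℕ⁴ with k₁−k₂+k₃−k₄ = 0 of f_{k₁,k₂,k₃,k₄}·v_{k₁}·conj(v_{k₂})·v_{k₃}·conj(v_{k₄}), and define X_F(v) to be the sequence with n-th entry X_F(v)(n) = −4i·Σ over (k₁,k₂,k₃) ∈ ℕ³ with k₁−k₂+k₃ = n of f_{k₁,k₂,k₃,n}·v_{k₁}·conj(v_{k₂})·v_{k₃}. Then for every s > 1/2 there exists a constant C_s > 0 such that for all v, h ∈ H^s₊: (i) the series defining F(v) converges absolutely, F(v) is a real number, and |F(v)| ≤ C_s‖v‖_{H^s}⁴; (ii) X_F(v) ∈ H^s₊ with ‖X_F(v)‖_{H^s} ≤ C_s‖v‖_{H^s}³; (iii) the map X_F : H^s₊ → H^s₊ is differentiable and its derivative satisfies ‖dX_F(v)‖ ≤ C_s‖v‖_{H^s}² in operator norm on H^s₊. -/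

import Mathlib

/-!
Write `⟨k⟩ = (1 + k²)^(1/2)`. As `s > 1/2`, `Σ ⟨k⟩^(-2s) < ∞`, so by Cauchy–Schwarz `H^s₊ ⊂ ℓ¹`;
together with `|f| ≤ 1/4` this gives the absolute convergence of `F(v)` and `|F(v)| ≲ ‖v‖⁴`, and
`F(v)` is real because `(k₁, k₂, k₃, k₄) ↦ (k₂, k₁, k₄, k₃)` conjugates its terms.

`X_F(v) = -4i T(v, v, v)` for the trilinear form
`T(a, b, c)(n) = Σ_{k₁-k₂+k₃=n} f_{k₁,k₂,k₃,n} a_{k₁} conj(b_{k₂}) c_{k₃}`. On the resonant set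
`n ≤ k₁ + k₃`, so `⟨n⟩^s ≤ 2^s (⟨k₁⟩^s + ⟨k₃⟩^s)`, and `⟨n⟩^s |T(a, b, c)(n)|` is dominated by two
convolutions of an `ℓ²` sequence with two `ℓ¹` sequences. Young's inequality gives
`‖T(a, b, c)‖_{H^s} ≲ ‖a‖ ‖b‖ ‖c‖`, and expanding `T(v + h, v + h, v + h)` shows that `X_F` has
derivative `h ↦ -4i (T(h, v, v) + T(v, h, v) + T(v, v, h))` with a remainder of size `O(‖h‖²)`.
-/

/-- Squared `H^s` norm of a sequence of Fourier coefficients. -/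
noncomputable def hsNormSq (s : ℝ) (v : ℕ → ℂ) : ℝ :=
  ∑' k : ℕ, (1 + (k : ℝ) ^ 2) ^ s * ‖v k‖ ^ 2

/-- `H^s` norm of a sequence of Fourier coefficients. -/
noncomputable def hsNorm (s : ℝ) (v : ℕ → ℂ) : ℝ :=
  Real.sqrt (hsNormSq s v)

/-- Membership in `H^s₊`. -/
def InHs (s : ℝ) (v : ℕ → ℂ) : Prop :=
  Summable fun k : ℕ => (1 + (k : ℝ) ^ 2) ^ s * ‖v k‖ ^ 2

/-- The `k`-th Fourier coefficient of `Π(|v|²v)`: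
the sum over `k₁ - k₂ + k₃ = k` of `v_{k₁} * conj v_{k₂} * v_{k₃}`. -/
noncomputable def cubicTerm (v : ℕ → ℂ) (k : ℕ) : ℂ :=
  ∑' p : ℕ × ℕ × ℕ,
    if p.1 + p.2.2 = k + p.2.1 then v p.1 * (starRingEnd ℂ) (v p.2.1) * v p.2.2 else 0

/-- Absolute convergence of the sum defining `cubicTerm v k`. -/
def CubicSummable (v : ℕ → ℂ) (k : ℕ) : Prop :=
  Summable fun p : ℕ × ℕ × ℕ =>
    ‖if p.1 + p.2.2 = k + p.2.1 then v p.1 * (starRingEnd ℂ) (v p.2.1) * v p.2.2 else 0‖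

/-- Continuity of `t ↦ u(t)` as a curve with values in `H^s₊`. -/
def HsContinuous (s : ℝ) (u : ℝ → ℕ → ℂ) : Prop :=
  ∀ t₀ : ℝ, ∀ δ : ℝ, 0 < δ → ∃ η > 0, ∀ t : ℝ, |t - t₀| < η →
    hsNorm s (fun k => u t k - u t₀ k) < δ

/-- `u ∈ C(ℝ, H^s₊)` is a solution of the NLS–Szegő equation
`i ∂ₜ u + ε^α ∂ₓ² u = Π(|u|²u)`, written on Fourier coefficients. -/
def IsSolutionNLSSzego (s ε α : ℝ) (u : ℝ → ℕ → ℂ) : Prop :=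
  (∀ t : ℝ, InHs s (u t)) ∧ HsContinuous s u ∧
  ∀ t : ℝ, ∀ k : ℕ, CubicSummable (u t) k ∧
    HasDerivAt (fun τ : ℝ => u τ k)
      (-Complex.I * (((ε ^ α * (k : ℝ) ^ 2 : ℝ) : ℂ) * u t k + cubicTerm (u t) k)) t

/-- The coefficients `f_{k₁,k₂,k₃,k₄}` of the Birkhoff auxiliary functional `F`. -/
noncomputable def fCoef (k₁ k₂ k₃ k₄ : ℕ) : ℂ :=
  if ((k₁ : ℤ) ^ 2 - (k₂ : ℤ) ^ 2 + (k₃ : ℤ) ^ 2 - (k₄ : ℤ) ^ 2) = 0 then 0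
  else Complex.I /
    (4 * (((k₁ : ℤ) ^ 2 - (k₂ : ℤ) ^ 2 + (k₃ : ℤ) ^ 2 - (k₄ : ℤ) ^ 2 : ℤ) : ℂ))

/-- The Hamiltonian vector field `X_F` of `F`:
`X_F(v)(n) = -4i Σ_{k₁-k₂+k₃=n} f_{k₁,k₂,k₃,n} v_{k₁} conj(v_{k₂}) v_{k₃}`. -/
noncomputable def XF (v : ℕ → ℂ) : ℕ → ℂ := fun n =>
  (-4) * Complex.I *
    ∑' p : ℕ × ℕ × ℕ,
      if p.1 + p.2.2 = n + p.2.1 then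
        fCoef p.1 p.2.1 p.2.2 n * v p.1 * (starRingEnd ℂ) (v p.2.1) * v p.2.2
      else 0

/-- Elementary formulation of (Fréchet) differentiability of a map
`Φ : H^s₊ → H^s₊` at `v`, with an `ℝ`-linear derivative `D` of operator norm
at most `B`. -/
def HasHsDerivAt (s : ℝ) (Φ : (ℕ → ℂ) → ℕ → ℂ) (v : ℕ → ℂ)
    (D : (ℕ → ℂ) → ℕ → ℂ) (B : ℝ) : Prop :=
  (∀ h₁ h₂ : ℕ → ℂ, InHs s h₁ → InHs s h₂ →
    ∀ k, D (fun j => h₁ j + h₂ j) k = D h₁ k + D h₂ k) ∧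
  (∀ (c : ℝ) (h : ℕ → ℂ), InHs s h →
    ∀ k, D (fun j => (c : ℂ) * h j) k = (c : ℂ) * D h k) ∧
  (∀ h : ℕ → ℂ, InHs s h → InHs s (D h) ∧ hsNorm s (D h) ≤ B * hsNorm s h) ∧
  (∀ η : ℝ, 0 < η → ∃ r > 0, ∀ h : ℕ → ℂ, InHs s h → hsNorm s h < r →
    hsNorm s (fun k => Φ (fun j => v j + h j) k - Φ v k - D h k) ≤ η * hsNorm s h)

/-- The functional `F(v) = Σ_{k₁-k₂+k₃-k₄=0} f_{k₁,k₂,k₃,k₄} v_{k₁} conj(v_{k₂}) v_{k₃} conj(v_{k₄})`. -/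
noncomputable def Ffun (v : ℕ → ℂ) : ℂ :=
  ∑' q : ℕ × ℕ × ℕ × ℕ,
    if q.1 + q.2.2.1 = q.2.1 + q.2.2.2 then
      fCoef q.1 q.2.1 q.2.2.1 q.2.2.2 * v q.1 * (starRingEnd ℂ) (v q.2.1) * v q.2.2.1 *
        (starRingEnd ℂ) (v q.2.2.2)
    else 0

/-- Absolute convergence of the series defining `F(v)`. -/
def FfunSummable (v : ℕ → ℂ) : Prop :=
  Summable fun q : ℕ × ℕ × ℕ × ℕ =>
    ‖if q.1 + q.2.2.1 = q.2.1 + q.2.2.2 then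
      fCoef q.1 q.2.1 q.2.2.1 q.2.2.2 * v q.1 * (starRingEnd ℂ) (v q.2.1) * v q.2.2.1 *
        (starRingEnd ℂ) (v q.2.2.2)
    else 0‖

open scoped ComplexConjugate

namespace NLSSzego

noncomputable def hsWeight (s : ℝ) (k : ℕ) : ℝ := (1 + (k : ℝ) ^ 2) ^ (s / 2)

lemma hsWeight_nonneg (s : ℝ) (k : ℕ) : 0 ≤ hsWeight s k :=
  Real.rpow_nonneg (by positivity) _

lemma hsWeight_sq (s : ℝ) (k : ℕ) : hsWeight s k ^ 2 = (1 + (k : ℝ) ^ 2) ^ s := by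
  rw [hsWeight, ← Real.rpow_natCast, ← Real.rpow_mul (by positivity)]
  norm_num

lemma hsWeight_le_of_le_two_mul {s : ℝ} (hs : 0 ≤ s) {n m : ℕ} (h : n ≤ 2 * m) :
    hsWeight s n ≤ 2 ^ s * hsWeight s m := by
  have hnm : 1 + (n : ℝ) ^ 2 ≤ 2 ^ (2 : ℝ) * (1 + (m : ℝ) ^ 2) := by
    have : (n : ℝ) ≤ 2 * m := by exact_mod_cast h
    norm_num
    nlinarith [(n.cast_nonneg : (0 : ℝ) ≤ n)]
  calc hsWeight s n ≤ (2 ^ (2 : ℝ) * (1 + (m : ℝ) ^ 2)) ^ (s / 2) :=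
        Real.rpow_le_rpow (by positivity) hnm (by positivity)
    _ = 2 ^ s * hsWeight s m := by
        rw [Real.mul_rpow (by positivity) (by positivity), ← Real.rpow_mul (by norm_num), hsWeight]
        ring_nf

lemma hsWeight_le_of_add_eq {s : ℝ} (hs : 0 ≤ s) {n k₁ k₂ k₃ : ℕ} (h : k₁ + k₃ = n + k₂) :
    hsWeight s n ≤ 2 ^ s * (hsWeight s k₁ + hsWeight s k₃) := by
  rw [mul_add]
  rcases le_total k₁ k₃ with hk | hk
  · exact (hsWeight_le_of_le_two_mul hs (by omega)).trans
      (le_add_of_nonneg_left (by positivity [hsWeight_nonneg s k₁]))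
  · exact (hsWeight_le_of_le_two_mul hs (by omega)).trans
      (le_add_of_nonneg_right (by positivity [hsWeight_nonneg s k₃]))

lemma summable_one_add_sq_rpow_neg {s : ℝ} (hs : 1 / 2 < s) :
    Summable fun k : ℕ => (1 + (k : ℝ) ^ 2) ^ (-s) := by
  have h := (Real.summable_one_div_nat_add_rpow 1 (2 * s)).2 (by linarith)
  refine (h.mul_left (2 ^ s)).of_nonneg_of_le (fun k => by positivity) fun k => ?_
  have hk : ((k : ℝ) + 1) ^ 2 ≤ (1 + (k : ℝ) ^ 2) * 2 := by nlinarith [sq_nonneg ((k : ℝ) - 1)]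
  rw [abs_of_pos (by positivity), Real.rpow_mul (by positivity), Real.rpow_neg (by positivity),
    ← div_eq_mul_one_div, le_div_iff₀ (by positivity), inv_mul_le_iff₀ (by positivity),
    ← Real.mul_rpow (by positivity) (by positivity), Real.rpow_two]
  exact Real.rpow_le_rpow (by positivity) hk (by linarith)

noncomputable def l1Const (s : ℝ) : ℝ := √(∑' k : ℕ, (1 + (k : ℝ) ^ 2) ^ (-s))

lemma l1Const_nonneg (s : ℝ) : 0 ≤ l1Const s := Real.sqrt_nonneg _

lemma summable_norm_and_tsum_le_of_inHs {s : ℝ} (hs : 1 / 2 < s) {v : ℕ → ℂ} (hv : InHs s v) :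
    Summable (fun k => ‖v k‖) ∧ ∑' k, ‖v k‖ ≤ l1Const s * hsNorm s v := by
  have hinv : ∀ k : ℕ, (1 + (k : ℝ) ^ 2) ^ (-s / 2) * (hsWeight s k * ‖v k‖) = ‖v k‖ := by
    intro k
    rw [hsWeight, ← mul_assoc, ← Real.rpow_add (by positivity), neg_div, neg_add_cancel,
      Real.rpow_zero, one_mul]
  have hf : ∀ k : ℕ, ((1 + (k : ℝ) ^ 2) ^ (-s / 2)) ^ (2 : ℝ) = (1 + (k : ℝ) ^ 2) ^ (-s) := by
    intro k
    rw [← Real.rpow_mul (by positivity)]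
    ring_nf
  have hg : ∀ k : ℕ, (hsWeight s k * ‖v k‖) ^ (2 : ℝ) = (1 + (k : ℝ) ^ 2) ^ s * ‖v k‖ ^ 2 := by
    intro k
    rw [Real.rpow_two, mul_pow, hsWeight_sq]
  have := Real.summable_and_inner_le_Lp_mul_Lq_tsum_of_nonneg .two_two
    (f := fun k : ℕ => (1 + (k : ℝ) ^ 2) ^ (-s / 2)) (g := fun k => hsWeight s k * ‖v k‖)
    (fun k => by positivity) (fun k => by positivity [hsWeight_nonneg s k])
    (by simpa only [hf] using summable_one_add_sq_rpow_neg hs) (by simp only [hg]; exact hv)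
  simpa only [hinv, hf, hg, ← Real.sqrt_eq_rpow, l1Const, hsNorm, hsNormSq] using this

local notation "ℓ²" => lp (fun _ : ℕ => ℝ) 2

lemma memℓp_two_of_summable_sq {f : ℕ → ℝ} (h : Summable fun n => f n ^ 2) : Memℓp f 2 :=
  memℓp_gen (by simpa using h)

lemma summable_sq_of_lp (e : ℓ²) : Summable fun n => e n ^ 2 := by
  simpa using (lp.memℓp e).summable (p := 2) (by norm_num)

lemma norm_sq_eq_tsum_sq (e : ℓ²) : ‖e‖ ^ 2 = ∑' n, e n ^ 2 := by
  simpa using lp.norm_rpow_eq_tsum (p := 2) (by norm_num) e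

lemma hsNormSq_eq_tsum (s : ℝ) (v : ℕ → ℂ) :
    hsNormSq s v = ∑' k, (hsWeight s k * ‖v k‖) ^ 2 := by
  simp only [hsNormSq, mul_pow, hsWeight_sq]

lemma inHs_iff (s : ℝ) (v : ℕ → ℂ) :
    InHs s v ↔ Summable fun k => (hsWeight s k * ‖v k‖) ^ 2 := by
  simp only [InHs, mul_pow, hsWeight_sq]

lemma hsNorm_nonneg (s : ℝ) (v : ℕ → ℂ) : 0 ≤ hsNorm s v := Real.sqrt_nonneg _

noncomputable def hsMajorant {s : ℝ} {v : ℕ → ℂ} (hv : InHs s v) : ℓ² :=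
  ⟨fun k => hsWeight s k * ‖v k‖, memℓp_two_of_summable_sq ((inHs_iff s v).1 hv)⟩

lemma norm_hsMajorant {s : ℝ} {v : ℕ → ℂ} (hv : InHs s v) : ‖hsMajorant hv‖ = hsNorm s v := by
  rw [hsNorm, hsNormSq_eq_tsum, ← Real.sqrt_sq (norm_nonneg (hsMajorant hv)),
    norm_sq_eq_tsum_sq]
  rfl

/-- Unlike bounds on `hsNorm`, such `ℓ²` majorants add up without summability side conditions. -/
def HsDominated (s : ℝ) (u : ℕ → ℂ) (B : ℝ) : Prop :=
  ∃ E : ℓ², (∀ n, hsWeight s n * ‖u n‖ ≤ E n) ∧ ‖E‖ ≤ B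

namespace HsDominated

variable {s B B' : ℝ} {u u' : ℕ → ℂ}

lemma inHs_and_hsNorm_le (h : HsDominated s u B) : InHs s u ∧ hsNorm s u ≤ B := by
  obtain ⟨E, hE, hEB⟩ := h
  have hsq : ∀ n, (hsWeight s n * ‖u n‖) ^ 2 ≤ E n ^ 2 := fun n =>
    pow_le_pow_left₀ (by positivity [hsWeight_nonneg s n]) (hE n) 2
  have hsum := (summable_sq_of_lp E).of_nonneg_of_le (fun n => sq_nonneg _) hsq
  refine ⟨(inHs_iff s u).2 hsum, ?_⟩
  calc hsNorm s u ≤ √(∑' n, E n ^ 2) := by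
        rw [hsNorm, hsNormSq_eq_tsum]
        exact Real.sqrt_le_sqrt (hsum.tsum_le_tsum hsq (summable_sq_of_lp E))
    _ = ‖E‖ := by rw [← norm_sq_eq_tsum_sq, Real.sqrt_sq (norm_nonneg E)]
    _ ≤ B := hEB

lemma inHs (h : HsDominated s u B) : InHs s u := h.inHs_and_hsNorm_le.1

lemma hsNorm_le (h : HsDominated s u B) : hsNorm s u ≤ B := h.inHs_and_hsNorm_le.2

lemma mono (h : HsDominated s u B) (hB : B ≤ B') : HsDominated s u B' :=
  let ⟨E, hE, hEB⟩ := h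
  ⟨E, hE, hEB.trans hB⟩

lemma congr (h : HsDominated s u B) (hu : ∀ n, u n = u' n) : HsDominated s u' B :=
  funext hu ▸ h

lemma add (h : HsDominated s u B) (h' : HsDominated s u' B') :
    HsDominated s (fun n => u n + u' n) (B + B') := by
  obtain ⟨E, hE, hEB⟩ := h
  obtain ⟨E', hE', hEB'⟩ := h'
  refine ⟨E + E', fun n => ?_, (norm_add_le E E').trans (add_le_add hEB hEB')⟩
  calc hsWeight s n * ‖u n + u' n‖ ≤ hsWeight s n * ‖u n‖ + hsWeight s n * ‖u' n‖ := by
        rw [← mul_add]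
        exact mul_le_mul_of_nonneg_left (norm_add_le _ _) (hsWeight_nonneg s n)
    _ ≤ (E + E') n := add_le_add (hE n) (hE' n)

lemma const_mul (z : ℂ) (h : HsDominated s u B) :
    HsDominated s (fun n => z * u n) (‖z‖ * B) := by
  obtain ⟨E, hE, hEB⟩ := h
  refine ⟨‖z‖ • E, fun n => ?_, ?_⟩
  · calc hsWeight s n * ‖z * u n‖ = ‖z‖ * (hsWeight s n * ‖u n‖) := by rw [norm_mul]; ring
      _ ≤ (‖z‖ • E) n := mul_le_mul_of_nonneg_left (hE n) (norm_nonneg z)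
  · rw [norm_smul, norm_norm]
    exact mul_le_mul_of_nonneg_left hEB (norm_nonneg z)

end HsDominated

section Resonant

variable {M : Type*} [AddCommMonoid M] [TopologicalSpace M]

def onResonant (n : ℕ) (f : ℕ → ℕ → ℕ → M) (p : ℕ × ℕ × ℕ) : M :=
  if p.1 + p.2.2 = n + p.2.1 then f p.1 p.2.1 p.2.2 else 0

def resonantParam (n : ℕ) (q : ℕ × ℕ) : ℕ × ℕ × ℕ := (n + q.1 - q.2, q.1, q.2)

lemma resonantParam_injective (n : ℕ) : Function.Injective (resonantParam n) :=
  fun _ _ h => Prod.ext (congrArg (·.2.1) h) (congrArg (·.2.2) h)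

lemma hasSum_onResonant_iff {n : ℕ} {f : ℕ → ℕ → ℕ → M} {a : M} :
    HasSum (onResonant n f) a ↔
      HasSum (fun q : ℕ × ℕ => if q.2 ≤ n + q.1 then f (n + q.1 - q.2) q.1 q.2 else 0) a := by
  rw [← (resonantParam_injective n).hasSum_iff]
  · refine Iff.of_eq (congrArg (HasSum · a) (funext fun q => ?_))
    show (if n + q.1 - q.2 + q.2 = n + q.1 then _ else _) = _
    split_ifs <;> first | rfl | (exfalso; omega)
  · rintro ⟨k₁, k₂, k₃⟩ hp
    by_cases hres : k₁ + k₃ = n + k₂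
    · refine (hp ⟨(k₂, k₃), ?_⟩).elim
      show (n + k₂ - k₃, k₂, k₃) = (k₁, k₂, k₃)
      rw [Prod.mk.injEq]
      exact ⟨by omega, rfl⟩
    · exact if_neg hres

def swapOuter : ℕ × ℕ × ℕ ≃ ℕ × ℕ × ℕ where
  toFun p := (p.2.2, p.2.1, p.1)
  invFun p := (p.2.2, p.2.1, p.1)
  left_inv _ := rfl
  right_inv _ := rfl

lemma hasSum_onResonant_swap_iff {n : ℕ} {f : ℕ → ℕ → ℕ → M} {a : M} :
    HasSum (onResonant n fun i j k => f k j i) a ↔ HasSum (onResonant n f) a := by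
  rw [← swapOuter.hasSum_iff]
  refine Iff.of_eq (congrArg (HasSum · a) (funext fun p => ?_))
  simp only [Function.comp_apply, onResonant, swapOuter, Equiv.coe_fn_mk]
  split_ifs <;> first | rfl | (exfalso; omega)

end Resonant

lemma hasSum_mul_of_nonneg {ι κ : Type*} {f : ι → ℝ} {g : κ → ℝ} {a b : ℝ} (hf : HasSum f a)
    (hg : HasSum g b) (hf0 : ∀ i, 0 ≤ f i) (hg0 : ∀ j, 0 ≤ g j) :
    HasSum (fun q : ι × κ => f q.1 * g q.2) (a * b) :=
  hf.mul hg (hf.summable.mul_of_nonneg hg.summable hf0 hg0)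

lemma hasSum_sq_shift (z : ℓ²) (j k : ℕ) :
    HasSum (fun n => (if k ≤ n + j then z (n + j - k) else 0) ^ 2)
      (∑' d, z (d + (j - k)) ^ 2) := by
  have hinj : Function.Injective (· + (k - j)) := add_left_injective _
  rw [← hinj.hasSum_iff]
  · have h : HasSum (fun d => z (d + (j - k)) ^ 2) (∑' d, z (d + (j - k)) ^ 2) :=
      ((summable_nat_add_iff (j - k)).2 (summable_sq_of_lp z)).hasSum
    convert h using 2 with d
    rw [Function.comp_apply, if_pos (by omega), show d + (k - j) + j - k = d + (j - k) by omega]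
  · intro n hn
    rw [if_neg fun h => hn ⟨n - (k - j), show n - (k - j) + (k - j) = n by omega⟩]
    simp

noncomputable def shiftL2 (z : ℓ²) (j k : ℕ) : ℓ² :=
  ⟨fun n => if k ≤ n + j then z (n + j - k) else 0,
    memℓp_two_of_summable_sq (hasSum_sq_shift z j k).summable⟩

lemma norm_shiftL2_le (z : ℓ²) (j k : ℕ) : ‖shiftL2 z j k‖ ≤ ‖z‖ := by
  refine (pow_le_pow_iff_left₀ (norm_nonneg _) (norm_nonneg _) two_ne_zero).1 ?_
  rw [norm_sq_eq_tsum_sq, norm_sq_eq_tsum_sq]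
  change ∑' n, (if k ≤ n + j then z (n + j - k) else 0) ^ 2 ≤ _
  rw [(hasSum_sq_shift z j k).tsum_eq]
  exact tsum_comp_le_tsum_of_inj (summable_sq_of_lp z) (fun _ => sq_nonneg _)
    (add_left_injective (j - k))

/-- Young's inequality `ℓ² * ℓ¹ * ℓ¹ → ℓ²` for the resonant convolution, by Minkowski's
inequality applied to the sum of the shifts `shiftL2 z k₂ k₃`. -/
lemma exists_hasSum_onResonant_le (z : ℓ²) {x y : ℕ → ℝ} (hx0 : ∀ j, 0 ≤ x j)
    (hy0 : ∀ k, 0 ≤ y k) (hx : Summable x) (hy : Summable y) :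
    ∃ e : ℓ², (∀ n, HasSum (onResonant n fun i j k => z i * x j * y k) (e n)) ∧
      ‖e‖ ≤ ‖z‖ * (∑' j, x j) * ∑' k, y k := by
  set G : ℕ × ℕ → ℓ² := fun q => (x q.1 * y q.2) • shiftL2 z q.1 q.2
  have hxy := hasSum_mul_of_nonneg hx.hasSum hy.hasSum hx0 hy0
  have hG : ∀ q, ‖G q‖ ≤ x q.1 * y q.2 * ‖z‖ := fun q => by
    rw [norm_smul, Real.norm_of_nonneg (mul_nonneg (hx0 _) (hy0 _))]
    exact mul_le_mul_of_nonneg_left (norm_shiftL2_le z _ _) (mul_nonneg (hx0 _) (hy0 _))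
  have hGsum : Summable G :=
    ((hxy.summable.mul_right ‖z‖).of_nonneg_of_le (fun _ => norm_nonneg _) hG).of_norm
  refine ⟨∑' q, G q, fun n => ?_, ?_⟩
  · have hcoord : ∀ q : ℕ × ℕ, lp.evalCLM ℝ (fun _ : ℕ => ℝ) 2 n (G q) =
        if q.2 ≤ n + q.1 then z (n + q.1 - q.2) * x q.1 * y q.2 else 0 := fun q => by
      change x q.1 * y q.2 * (if q.2 ≤ n + q.1 then z (n + q.1 - q.2) else 0) = _
      split_ifs <;> ring
    have h := (lp.evalCLM ℝ (fun _ : ℕ => ℝ) 2 n).hasSum hGsum.hasSum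
    simp only [hcoord] at h
    exact hasSum_onResonant_iff.2 h
  · exact tsum_of_norm_bounded
      (by simpa only [mul_comm ‖z‖, mul_assoc] using hxy.mul_right ‖z‖) hG

lemma norm_fCoef_le (k₁ k₂ k₃ k₄ : ℕ) : ‖fCoef k₁ k₂ k₃ k₄‖ ≤ 1 / 4 := by
  unfold fCoef
  split_ifs with hm
  · norm_num
  · rw [norm_div, Complex.norm_I, norm_mul, Complex.norm_intCast, Complex.norm_ofNat,
      div_le_div_iff₀ (by positivity [abs_pos.2 hm]) (by norm_num)]
    have : (1 : ℝ) ≤ |(((k₁ : ℤ) ^ 2 - (k₂ : ℤ) ^ 2 + (k₃ : ℤ) ^ 2 - (k₄ : ℤ) ^ 2 : ℤ) : ℝ)| := by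
      rw [← Int.cast_abs]
      exact_mod_cast Int.one_le_abs hm
    linarith

lemma fCoef_swap (k₁ k₂ k₃ k₄ : ℕ) : fCoef k₂ k₁ k₄ k₃ = conj (fCoef k₁ k₂ k₃ k₄) := by
  have hneg : (k₂ : ℤ) ^ 2 - (k₁ : ℤ) ^ 2 + (k₄ : ℤ) ^ 2 - (k₃ : ℤ) ^ 2
      = -((k₁ : ℤ) ^ 2 - (k₂ : ℤ) ^ 2 + (k₃ : ℤ) ^ 2 - (k₄ : ℤ) ^ 2) := by ring
  unfold fCoef
  simp only [hneg, neg_eq_zero]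
  split_ifs
  · simp
  · rw [map_div₀, map_mul, Complex.conj_I, map_intCast, map_ofNat, Int.cast_neg, mul_neg,
      div_neg, neg_div]

noncomputable def trilinear (a b c : ℕ → ℂ) (n : ℕ) : ℂ :=
  ∑' p, onResonant n (fun i j k => fCoef i j k n * a i * conj (b j) * c k) p

lemma XF_apply (v : ℕ → ℂ) (n : ℕ) : XF v n = -4 * Complex.I * trilinear v v v n := rfl

lemma norm_onResonant_trilinear_le (a b c : ℕ → ℂ) (n : ℕ) (p : ℕ × ℕ × ℕ) :
    ‖onResonant n (fun i j k => fCoef i j k n * a i * conj (b j) * c k) p‖ ≤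
      1 / 4 * (‖a p.1‖ * (‖b p.2.1‖ * ‖c p.2.2‖)) := by
  unfold onResonant
  split_ifs
  · rw [norm_mul, norm_mul, norm_mul, RCLike.norm_conj, ← mul_assoc, ← mul_assoc]
    gcongr
    exact norm_fCoef_le _ _ _ _
  · rw [norm_zero]
    positivity

lemma summable_norm_onResonant_trilinear {a b c : ℕ → ℂ} (ha : Summable fun k => ‖a k‖)
    (hb : Summable fun k => ‖b k‖) (hc : Summable fun k => ‖c k‖) (n : ℕ) :
    Summable fun p => ‖onResonant n (fun i j k => fCoef i j k n * a i * conj (b j) * c k) p‖ := by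
  have h0 : ∀ (u : ℕ → ℂ) k, 0 ≤ ‖u k‖ := fun _ _ => norm_nonneg _
  have habc := hasSum_mul_of_nonneg ha.hasSum
    (hasSum_mul_of_nonneg hb.hasSum hc.hasSum (h0 b) (h0 c)) (h0 a)
    fun q => mul_nonneg (h0 b q.1) (h0 c q.2)
  exact (habc.summable.mul_left (1 / 4)).of_nonneg_of_le (fun _ => norm_nonneg _)
    (norm_onResonant_trilinear_le a b c n)

/-- On the resonant set `n ≤ k₁ + k₃`, so the weight at `n` is carried by `k₁` or by `k₃`. -/
lemma hsWeight_mul_norm_onResonant_trilinear_le {s : ℝ} (hs : 0 ≤ s) (a b c : ℕ → ℂ) (n : ℕ)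
    (p : ℕ × ℕ × ℕ) :
    hsWeight s n * ‖onResonant n (fun i j k => fCoef i j k n * a i * conj (b j) * c k) p‖ ≤
      2 ^ s / 4 * (onResonant n (fun i j k => hsWeight s i * ‖a i‖ * ‖b j‖ * ‖c k‖) p +
        onResonant n (fun i j k => hsWeight s k * ‖c k‖ * ‖b j‖ * ‖a i‖) p) := by
  unfold onResonant
  split_ifs with h
  · rw [norm_mul, norm_mul, norm_mul, RCLike.norm_conj]
    calc hsWeight s n * (‖fCoef p.1 p.2.1 p.2.2 n‖ * ‖a p.1‖ * ‖b p.2.1‖ * ‖c p.2.2‖)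
        ≤ 2 ^ s * (hsWeight s p.1 + hsWeight s p.2.2) *
            (1 / 4 * ‖a p.1‖ * ‖b p.2.1‖ * ‖c p.2.2‖) := by
          gcongr
          · positivity [hsWeight_nonneg s p.1, hsWeight_nonneg s p.2.2]
          · exact hsWeight_le_of_add_eq hs h
          · exact norm_fCoef_le _ _ _ _
      _ = _ := by ring
  · simp

lemma hsWeight_mul_norm_trilinear_le {s : ℝ} (hs : 0 ≤ s) {a b c : ℕ → ℂ}
    (ha : Summable fun k => ‖a k‖) (hb : Summable fun k => ‖b k‖) (hc : Summable fun k => ‖c k‖)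
    {n : ℕ} {m₁ m₂ : ℝ}
    (h₁ : HasSum (onResonant n fun i j k => hsWeight s i * ‖a i‖ * ‖b j‖ * ‖c k‖) m₁)
    (h₂ : HasSum (onResonant n fun i j k => hsWeight s k * ‖c k‖ * ‖b j‖ * ‖a i‖) m₂) :
    hsWeight s n * ‖trilinear a b c n‖ ≤ 2 ^ s / 4 * (m₁ + m₂) := by
  have habs := summable_norm_onResonant_trilinear ha hb hc n
  calc hsWeight s n * ‖trilinear a b c n‖
      ≤ ∑' p, hsWeight s n *
          ‖onResonant n (fun i j k => fCoef i j k n * a i * conj (b j) * c k) p‖ := by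
        rw [tsum_mul_left]
        exact mul_le_mul_of_nonneg_left (norm_tsum_le_tsum_norm habs) (hsWeight_nonneg s n)
    _ ≤ 2 ^ s / 4 * (m₁ + m₂) :=
        hasSum_le (hsWeight_mul_norm_onResonant_trilinear_le hs a b c n) (habs.mul_left _).hasSum
          ((h₁.add h₂).mul_left _)

noncomputable def trilinearConst (s : ℝ) : ℝ := 2 ^ s * l1Const s ^ 2 / 2

lemma hsDominated_trilinear {s : ℝ} (hs : 1 / 2 < s) {a b c : ℕ → ℂ} (ha : InHs s a)
    (hb : InHs s b) (hc : InHs s c) :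
    HsDominated s (trilinear a b c) (trilinearConst s * (hsNorm s a * hsNorm s b * hsNorm s c)) := by
  obtain ⟨la, la'⟩ := summable_norm_and_tsum_le_of_inHs hs ha
  obtain ⟨lb, lb'⟩ := summable_norm_and_tsum_le_of_inHs hs hb
  obtain ⟨lc, lc'⟩ := summable_norm_and_tsum_le_of_inHs hs hc
  have h0 : ∀ (u : ℕ → ℂ) k, 0 ≤ ‖u k‖ := fun _ _ => norm_nonneg _
  obtain ⟨e₁, he₁, he₁n⟩ := exists_hasSum_onResonant_le (hsMajorant ha) (h0 b) (h0 c) lb lc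
  obtain ⟨e₂, he₂, he₂n⟩ := exists_hasSum_onResonant_le (hsMajorant hc) (h0 b) (h0 a) lb la
  refine ⟨((2 : ℝ) ^ s / 4) • (e₁ + e₂), fun n => ?_, ?_⟩
  · exact hsWeight_mul_norm_trilinear_le (by linarith) la lb lc (he₁ n)
      (hasSum_onResonant_swap_iff.2 (he₂ n))
  · have hA := l1Const_nonneg s
    rw [norm_hsMajorant] at he₁n he₂n
    calc ‖((2 : ℝ) ^ s / 4) • (e₁ + e₂)‖ ≤ (2 : ℝ) ^ s / 4 * (‖e₁‖ + ‖e₂‖) := by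
          rw [norm_smul, Real.norm_of_nonneg (by positivity)]
          gcongr
          exact norm_add_le _ _
      _ ≤ (2 : ℝ) ^ s / 4 * (hsNorm s a * (l1Const s * hsNorm s b) * (l1Const s * hsNorm s c) +
            hsNorm s c * (l1Const s * hsNorm s b) * (l1Const s * hsNorm s a)) := by
          have : 0 ≤ ∑' k, ‖b k‖ := tsum_nonneg (h0 b)
          gcongr
          · exact he₁n.trans (by gcongr <;> positivity [hsNorm_nonneg s a, hsNorm_nonneg s b])
          · exact he₂n.trans (by gcongr <;> positivity [hsNorm_nonneg s c, hsNorm_nonneg s b])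
      _ = _ := by rw [trilinearConst]; ring

section TrilinearAlgebra

variable {a a₁ a₂ b b₁ b₂ c c₁ c₂ : ℕ → ℂ}

lemma trilinear_add_left (ha₁ : Summable fun k => ‖a₁ k‖) (ha₂ : Summable fun k => ‖a₂ k‖)
    (hb : Summable fun k => ‖b k‖) (hc : Summable fun k => ‖c k‖) (n : ℕ) :
    trilinear (fun j => a₁ j + a₂ j) b c n = trilinear a₁ b c n + trilinear a₂ b c n := by
  rw [trilinear, trilinear, trilinear,
    ← (summable_norm_onResonant_trilinear ha₁ hb hc n).of_norm.tsum_add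
      (summable_norm_onResonant_trilinear ha₂ hb hc n).of_norm]
  exact tsum_congr fun p => by unfold onResonant; split_ifs <;> ring

lemma trilinear_add_mid (ha : Summable fun k => ‖a k‖) (hb₁ : Summable fun k => ‖b₁ k‖)
    (hb₂ : Summable fun k => ‖b₂ k‖) (hc : Summable fun k => ‖c k‖) (n : ℕ) :
    trilinear a (fun j => b₁ j + b₂ j) c n = trilinear a b₁ c n + trilinear a b₂ c n := by
  rw [trilinear, trilinear, trilinear,
    ← (summable_norm_onResonant_trilinear ha hb₁ hc n).of_norm.tsum_add
      (summable_norm_onResonant_trilinear ha hb₂ hc n).of_norm]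
  exact tsum_congr fun p => by simp only [onResonant, map_add]; split_ifs <;> ring

lemma trilinear_add_right (ha : Summable fun k => ‖a k‖) (hb : Summable fun k => ‖b k‖)
    (hc₁ : Summable fun k => ‖c₁ k‖) (hc₂ : Summable fun k => ‖c₂ k‖) (n : ℕ) :
    trilinear a b (fun j => c₁ j + c₂ j) n = trilinear a b c₁ n + trilinear a b c₂ n := by
  rw [trilinear, trilinear, trilinear,
    ← (summable_norm_onResonant_trilinear ha hb hc₁ n).of_norm.tsum_add
      (summable_norm_onResonant_trilinear ha hb hc₂ n).of_norm]
  exact tsum_congr fun p => by unfold onResonant; split_ifs <;> ring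

lemma trilinear_const_mul_left (z : ℂ) (a b c : ℕ → ℂ) (n : ℕ) :
    trilinear (fun j => z * a j) b c n = z * trilinear a b c n := by
  rw [trilinear, trilinear, ← tsum_mul_left]
  exact tsum_congr fun p => by unfold onResonant; split_ifs <;> ring

lemma trilinear_ofReal_mul_mid (r : ℝ) (a b c : ℕ → ℂ) (n : ℕ) :
    trilinear a (fun j => (r : ℂ) * b j) c n = r * trilinear a b c n := by
  rw [trilinear, trilinear, ← tsum_mul_left]
  exact tsum_congr fun p => by
    simp only [onResonant, map_mul, Complex.conj_ofReal]; split_ifs <;> ring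

lemma trilinear_const_mul_right (z : ℂ) (a b c : ℕ → ℂ) (n : ℕ) :
    trilinear a b (fun j => z * c j) n = z * trilinear a b c n := by
  rw [trilinear, trilinear, ← tsum_mul_left]
  exact tsum_congr fun p => by unfold onResonant; split_ifs <;> ring

end TrilinearAlgebra

lemma trilinear_add_add_add {v h : ℕ → ℂ} (hv : Summable fun k => ‖v k‖)
    (hh : Summable fun k => ‖h k‖) (n : ℕ) :
    trilinear (fun j => v j + h j) (fun j => v j + h j) (fun j => v j + h j) n =
      trilinear v v v n + (trilinear h v v n + trilinear v h v n + trilinear v v h n) +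
        (trilinear h h v n + trilinear h v h n + trilinear v h h n + trilinear h h h n) := by
  have hvh : Summable fun k => ‖v k + h k‖ :=
    (hv.add hh).of_nonneg_of_le (fun _ => norm_nonneg _) fun _ => norm_add_le _ _
  rw [trilinear_add_left hv hh hvh hvh, trilinear_add_mid hv hv hh hvh,
    trilinear_add_mid hh hv hh hvh, trilinear_add_right hv hv hv hh, trilinear_add_right hv hh hv hh,
    trilinear_add_right hh hv hv hh, trilinear_add_right hh hh hv hh]
  ring

noncomputable def quarticTerm (v : ℕ → ℂ) (q : ℕ × ℕ × ℕ × ℕ) : ℂ :=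
  if q.1 + q.2.2.1 = q.2.1 + q.2.2.2 then
    fCoef q.1 q.2.1 q.2.2.1 q.2.2.2 * v q.1 * conj (v q.2.1) * v q.2.2.1 * conj (v q.2.2.2)
  else 0

lemma norm_quarticTerm_le (v : ℕ → ℂ) (q : ℕ × ℕ × ℕ × ℕ) :
    ‖quarticTerm v q‖ ≤ 1 / 4 * (‖v q.1‖ * (‖v q.2.1‖ * (‖v q.2.2.1‖ * ‖v q.2.2.2‖))) := by
  unfold quarticTerm
  split_ifs
  · rw [norm_mul, norm_mul, norm_mul, norm_mul, RCLike.norm_conj, RCLike.norm_conj, ← mul_assoc,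
      ← mul_assoc, ← mul_assoc]
    gcongr
    exact norm_fCoef_le _ _ _ _
  · rw [norm_zero]
    positivity

lemma hasSum_norm_quartic {v : ℕ → ℂ} (hv : Summable fun k => ‖v k‖) :
    HasSum (fun q : ℕ × ℕ × ℕ × ℕ => ‖v q.1‖ * (‖v q.2.1‖ * (‖v q.2.2.1‖ * ‖v q.2.2.2‖)))
      ((∑' k, ‖v k‖) ^ 4) := by
  have h0 : ∀ k, 0 ≤ ‖v k‖ := fun _ => norm_nonneg _
  have h2 := hasSum_mul_of_nonneg hv.hasSum hv.hasSum h0 h0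
  have h3 := hasSum_mul_of_nonneg hv.hasSum h2 h0 fun q => mul_nonneg (h0 _) (h0 _)
  have h4 := hasSum_mul_of_nonneg hv.hasSum h3 h0 fun q => mul_nonneg (h0 _) (mul_nonneg (h0 _) (h0 _))
  convert h4 using 1
  ring

lemma ffunSummable_of_summable_norm {v : ℕ → ℂ} (hv : Summable fun k => ‖v k‖) :
    FfunSummable v :=
  ((hasSum_norm_quartic hv).summable.mul_left (1 / 4)).of_nonneg_of_le (fun _ => norm_nonneg _)
    (norm_quarticTerm_le v)

lemma norm_Ffun_le {v : ℕ → ℂ} (hv : Summable fun k => ‖v k‖) :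
    ‖Ffun v‖ ≤ 1 / 4 * (∑' k, ‖v k‖) ^ 4 :=
  tsum_of_norm_bounded ((hasSum_norm_quartic hv).mul_left (1 / 4)) (norm_quarticTerm_le v)

def swapPairs : ℕ × ℕ × ℕ × ℕ ≃ ℕ × ℕ × ℕ × ℕ where
  toFun q := (q.2.1, q.1, q.2.2.2, q.2.2.1)
  invFun q := (q.2.1, q.1, q.2.2.2, q.2.2.1)
  left_inv _ := rfl
  right_inv _ := rfl

lemma conj_quarticTerm (v : ℕ → ℂ) (q : ℕ × ℕ × ℕ × ℕ) :
    conj (quarticTerm v q) = quarticTerm v (swapPairs q) := by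
  obtain ⟨k₁, k₂, k₃, k₄⟩ := q
  simp only [quarticTerm, swapPairs, Equiv.coe_fn_mk, eq_comm (a := k₂ + k₄)]
  split_ifs
  · rw [fCoef_swap k₁ k₂ k₃ k₄, map_mul, map_mul, map_mul, map_mul, Complex.conj_conj,
      Complex.conj_conj]
    ring
  · exact map_zero conj

lemma Ffun_im_eq_zero (v : ℕ → ℂ) : (Ffun v).im = 0 := by
  rw [← Complex.conj_eq_iff_im]
  change conj (∑' q, quarticTerm v q) = ∑' q, quarticTerm v q
  rw [Complex.conj_tsum]
  simp only [conj_quarticTerm]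
  exact swapPairs.tsum_eq (quarticTerm v)

lemma norm_neg_four_mul_I : ‖(-4 : ℂ) * Complex.I‖ = 4 := by
  rw [norm_mul, Complex.norm_I, mul_one, norm_neg, Complex.norm_ofNat]

lemma hsDominated_XF {s : ℝ} (hs : 1 / 2 < s) {v : ℕ → ℂ} (hv : InHs s v) :
    HsDominated s (XF v) (4 * trilinearConst s * hsNorm s v ^ 3) :=
  (((hsDominated_trilinear hs hv hv hv).const_mul (-4 * Complex.I)).congr
    fun n => (XF_apply v n).symm).mono (le_of_eq (by rw [norm_neg_four_mul_I]; ring))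

noncomputable def derivXF (v h : ℕ → ℂ) (n : ℕ) : ℂ :=
  -4 * Complex.I * (trilinear h v v n + trilinear v h v n + trilinear v v h n)

lemma hsDominated_derivXF {s : ℝ} (hs : 1 / 2 < s) {v h : ℕ → ℂ} (hv : InHs s v)
    (hh : InHs s h) :
    HsDominated s (derivXF v h) (12 * trilinearConst s * hsNorm s v ^ 2 * hsNorm s h) :=
  ((((hsDominated_trilinear hs hh hv hv).add (hsDominated_trilinear hs hv hh hv)).add
    (hsDominated_trilinear hs hv hv hh)).const_mul (-4 * Complex.I)).mono
    (le_of_eq (by rw [norm_neg_four_mul_I]; ring))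

lemma hsDominated_XF_sub_sub_derivXF {s : ℝ} (hs : 1 / 2 < s) {v h : ℕ → ℂ} (hv : InHs s v)
    (hh : InHs s h) :
    HsDominated s (fun n => XF (fun j => v j + h j) n - XF v n - derivXF v h n)
      (4 * trilinearConst s * (3 * hsNorm s v * hsNorm s h ^ 2 + hsNorm s h ^ 3)) := by
  have hT := fun {a b c : ℕ → ℂ} (ha : InHs s a) (hb : InHs s b) (hc : InHs s c) =>
    hsDominated_trilinear hs ha hb hc
  refine (((((hT hh hh hv).add (hT hh hv hh)).add (hT hv hh hh)).add (hT hh hh hh)).const_mul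
    (-4 * Complex.I)).congr (fun n => ?_) |>.mono (le_of_eq (by rw [norm_neg_four_mul_I]; ring))
  rw [XF_apply, XF_apply, derivXF,
    trilinear_add_add_add (summable_norm_and_tsum_le_of_inHs hs hv).1
      (summable_norm_and_tsum_le_of_inHs hs hh).1]
  ring

lemma exists_pos_mul_sq_add_mul_cube_le {α β η : ℝ} (hα : 0 ≤ α) (hβ : 0 ≤ β) (hη : 0 < η) :
    ∃ r > 0, ∀ t, 0 ≤ t → t < r → α * t ^ 2 + β * t ^ 3 ≤ η * t := by
  refine ⟨min 1 (η / (α + β + 1)), by positivity, fun t ht0 htr => ?_⟩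
  have ht1 : t ≤ 1 := (htr.trans_le (min_le_left _ _)).le
  have htη : (α + β + 1) * t ≤ η := by
    have := htr.trans_le (min_le_right _ _)
    rw [lt_div_iff₀ (by positivity)] at this
    linarith
  have ht3 : t ^ 3 ≤ t ^ 2 := pow_le_pow_of_le_one ht0 ht1 (by norm_num)
  nlinarith [mul_le_mul_of_nonneg_left ht3 hβ, mul_le_mul_of_nonneg_right htη ht0]

lemma HasHsDerivAt.mono {s B B' : ℝ} {Φ D : (ℕ → ℂ) → ℕ → ℂ} {v : ℕ → ℂ}
    (h : HasHsDerivAt s Φ v D B) (hB : B ≤ B') : HasHsDerivAt s Φ v D B' :=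
  ⟨h.1, h.2.1, fun u hu => ⟨(h.2.2.1 u hu).1,
    (h.2.2.1 u hu).2.trans (mul_le_mul_of_nonneg_right hB (hsNorm_nonneg s u))⟩, h.2.2.2⟩

lemma hasHsDerivAt_XF {s : ℝ} (hs : 1 / 2 < s) {v : ℕ → ℂ} (hv : InHs s v) :
    HasHsDerivAt s XF v (derivXF v) (12 * trilinearConst s * hsNorm s v ^ 2) := by
  have l1 := fun {u : ℕ → ℂ} (hu : InHs s u) => (summable_norm_and_tsum_le_of_inHs hs hu).1
  have hK : 0 ≤ trilinearConst s := by unfold trilinearConst; positivity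
  refine ⟨fun h₁ h₂ hh₁ hh₂ n => ?_, fun r h _ n => ?_, fun h hh => ?_, fun η hη => ?_⟩
  · rw [derivXF, derivXF, derivXF, trilinear_add_left (l1 hh₁) (l1 hh₂) (l1 hv) (l1 hv),
      trilinear_add_mid (l1 hv) (l1 hh₁) (l1 hh₂) (l1 hv),
      trilinear_add_right (l1 hv) (l1 hv) (l1 hh₁) (l1 hh₂)]
    ring
  · rw [derivXF, derivXF, trilinear_const_mul_left, trilinear_ofReal_mul_mid,
      trilinear_const_mul_right]
    ring
  · exact (hsDominated_derivXF hs hv hh).inHs_and_hsNorm_le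
  · obtain ⟨r, hr, hsmall⟩ := exists_pos_mul_sq_add_mul_cube_le
      (by positivity [hsNorm_nonneg s v] : 0 ≤ 12 * trilinearConst s * hsNorm s v)
      (by positivity : 0 ≤ 4 * trilinearConst s) hη
    refine ⟨r, hr, fun h hh hhr => ?_⟩
    refine (hsDominated_XF_sub_sub_derivXF hs hv hh).hsNorm_le.trans ?_
    have := hsmall _ (hsNorm_nonneg s h) hhr
    linarith

end NLSSzego

open NLSSzego

/-- Estimates on the auxiliary functional `F` and its Hamiltonian vector
field `X_F`: `F` is real valued with `|F(v)| ≲ ‖v‖⁴`, `‖X_F(v)‖ ≲ ‖v‖³`, and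
`X_F` is differentiable with `‖dX_F(v)‖ ≲ ‖v‖²`. -/
theorem statement12 (s : ℝ) (hs : 1 / 2 < s) :
    ∃ C : ℝ, 0 < C ∧ ∀ v : ℕ → ℂ, InHs s v →
      (FfunSummable v ∧ (Ffun v).im = 0 ∧ ‖Ffun v‖ ≤ C * hsNorm s v ^ 4) ∧
      (InHs s (XF v) ∧ hsNorm s (XF v) ≤ C * hsNorm s v ^ 3) ∧
      (∃ D : (ℕ → ℂ) → ℕ → ℂ, HasHsDerivAt s XF v D (C * hsNorm s v ^ 2)) := by
  set A := l1Const s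
  set K := trilinearConst s
  have hK : 0 ≤ K := by unfold K trilinearConst; positivity
  have hA : 0 ≤ A ^ 4 := by positivity
  refine ⟨A ^ 4 + 12 * K + 1, by positivity, fun v hv => ⟨?_, ?_, ?_⟩⟩
  · obtain ⟨hl1, hl1_le⟩ := summable_norm_and_tsum_le_of_inHs hs hv
    refine ⟨ffunSummable_of_summable_norm hl1, Ffun_im_eq_zero v, (norm_Ffun_le hl1).trans ?_⟩
    calc 1 / 4 * (∑' k, ‖v k‖) ^ 4 ≤ 1 / 4 * (A * hsNorm s v) ^ 4 := by gcongr
      _ = A ^ 4 / 4 * hsNorm s v ^ 4 := by ring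
      _ ≤ _ := mul_le_mul_of_nonneg_right (by linarith) (pow_nonneg (hsNorm_nonneg s v) 4)
  · have hX := hsDominated_XF hs hv
    exact ⟨hX.inHs, hX.hsNorm_le.trans
      (mul_le_mul_of_nonneg_right (by linarith) (pow_nonneg (hsNorm_nonneg s v) 3))⟩
  · exact ⟨derivXF v, (hasHsDerivAt_XF hs hv).mono
      (mul_le_mul_of_nonneg_right (by linarith) (pow_nonneg (hsNorm_nonneg s v) 2))⟩
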